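/- In a simple game (finite perfect-information game, no player moves twice on a path, no payoff ties), let s_i be a strategy of player i that chooses a non-backward-induction action at some decision node of i that is one step away from the terminal nodes (i.e., all of whose children are terminal). Then s_i is weakly dominated in the associated normal form: the strategy s'_i obtained from s_i by switching that node's action to the backward-induction action satisfies u_i(s'_i, s_{-i}) ≥ u_i(s_i, s_{-i}) for all opponent profiles s_{-i}, with strict inequality for some s_{-i}. -/

import Mathlib

/-- Finite extensive-form game trees with perfect information. -/
inductive GTree (ι : Type) where
  | leaf (payoff : ι → ℝ) : GTree ι
  | node (mover : ι) (children : List (GTree ι)) : GTree ι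

/-- Player `i` moves somewhere in the tree. -/
inductive Moves {ι : Type} (i : ι) : GTree ι → Prop where
  | here (ch : List (GTree ι)) : Moves i (.node i ch)
  | there {j : ι} {ch : List (GTree ι)} {t : GTree ι} :
      t ∈ ch → Moves i t → Moves i (.node j ch)

/-- A simple game tree: every decision node has at least one child, and no
player moves more than once along any path. -/
inductive Simple {ι : Type} : GTree ι → Prop where
  | leaf (p : ι → ℝ) : Simple (.leaf p)
  | node {i : ι} {ch : List (GTree ι)} :
      ch ≠ [] → (∀ t ∈ ch, Simple t) → (∀ t ∈ ch, ¬ Moves i t) →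
      Simple (.node i ch)

/-- `p` is the payoff vector at some terminal node of the tree. -/
inductive LeafOf {ι : Type} : (ι → ℝ) → GTree ι → Prop where
  | leaf (p : ι → ℝ) : LeafOf p (.leaf p)
  | node {p : ι → ℝ} {i : ι} {ch : List (GTree ι)} {t : GTree ι} :
      t ∈ ch → LeafOf p t → LeafOf p (.node i ch)

/-- No player is indifferent between any two (distinct) terminal nodes. -/
def NoTies {ι : Type} (t : GTree ι) : Prop :=
  ∀ (i : ι) (p q : ι → ℝ), LeafOf p t → LeafOf q t → p = q ∨ p i ≠ q i

/-- The subtree of `t` at the address (path of child indices) `a`. -/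
def subtreeAt {ι : Type} : GTree ι → List ℕ → Option (GTree ι)
  | t, [] => some t
  | GTree.leaf _, _ :: _ => none
  | GTree.node _ ch, k :: r =>
      match ch[k]? with
      | some c => subtreeAt c r
      | none => none
  termination_by t l => l.length

/-- The player who moves at address `a` of the tree `t`, if any. -/
def moverAt {ι : Type} (t : GTree ι) (a : List ℕ) : Option ι :=
  match subtreeAt t a with
  | some (GTree.node i _) => some i
  | _ => none

/-- `Outcome σ t a p`: playing the (joint) pure strategy profile `σ` — which
assigns a child index to every node address — from the subtree `t` located at
address `a` reaches a terminal node with payoff vector `p`. -/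
inductive Outcome {ι : Type} (σ : List ℕ → ℕ) : GTree ι → List ℕ → (ι → ℝ) → Prop where
  | leaf (p : ι → ℝ) (a : List ℕ) : Outcome σ (.leaf p) a p
  | node {i : ι} {ch : List (GTree ι)} {a : List ℕ} {c : GTree ι} {p : ι → ℝ} :
      ch[σ a]? = some c → Outcome σ c (a ++ [σ a]) p →
      Outcome σ (.node i ch) a p

/-- The joint profile in which player `i` uses `si` at `i`'s decision nodes and
the opponents' profile `sopp` is used everywhere else. -/
def comb {ι : Type} [DecidableEq ι] (t : GTree ι) (i : ι)
    (si sopp : List ℕ → ℕ) : List ℕ → ℕ :=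
  fun a => if moverAt t a = some i then si a else sopp a

/-!
Switching the action at the node `adr` only matters when play reaches `adr`, and there it
replaces the payoff `p` by the best payoff `p'` available to `i`; everywhere else both profiles
follow the same path. Conversely, in a simple game `i` moves nowhere strictly above `adr`, so the
opponents alone can steer play to `adr`, where the switch is a strict improvement.
-/

variable {ι : Type}

@[simp]
lemma subtreeAt_nil (t : GTree ι) : subtreeAt t [] = some t := by
  simp [subtreeAt]

lemma subtreeAt_append (a b : List ℕ) : ∀ t : GTree ι,
    subtreeAt t (a ++ b) = (subtreeAt t a).bind (subtreeAt · b) := by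
  induction a with
  | nil => simp
  | cons k r ih =>
    rintro (_ | ⟨j, ch⟩)
    · simp [subtreeAt]
    · cases h : ch[k]? <;> simp [subtreeAt, h, ih]

lemma subtreeAt_append_singleton {t c : GTree ι} {a : List ℕ} {j : ι} {ch : List (GTree ι)}
    {k : ℕ} (ha : subtreeAt t a = some (.node j ch)) (hk : ch[k]? = some c) :
    subtreeAt t (a ++ [k]) = some c := by
  simp [subtreeAt_append, ha, subtreeAt, hk]

lemma subtreeAt_node_cons {j : ι} {ch : List (GTree ι)} {k : ℕ} {r : List ℕ} {s : GTree ι}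
    (h : subtreeAt (.node j ch) (k :: r) = some s) :
    ∃ c ∈ ch, subtreeAt c r = some s := by
  simp only [subtreeAt] at h
  cases hk : ch[k]? with
  | none => simp [hk] at h
  | some c => exact ⟨c, List.mem_of_getElem? hk, by simpa [hk] using h⟩

lemma Moves.of_subtreeAt {i : ι} {ch : List (GTree ι)} :
    ∀ {a : List ℕ} {t : GTree ι}, subtreeAt t a = some (.node i ch) → Moves i t
  | [], _, h => by
    rw [subtreeAt_nil, Option.some_inj] at h
    exact h ▸ .here ch
  | _ :: _, .leaf _, h => by simp [subtreeAt] at h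
  | _ :: _, .node _ _, h => by
    obtain ⟨c, hc, h⟩ := subtreeAt_node_cons h
    exact .there hc (Moves.of_subtreeAt h)

lemma Simple.subtree : ∀ {a : List ℕ} {t s : GTree ι}, Simple t →
    subtreeAt t a = some s → Simple s
  | [], _, _, ht, h => by
    rw [subtreeAt_nil, Option.some_inj] at h
    exact h ▸ ht
  | _ :: _, .leaf _, _, _, h => by simp [subtreeAt] at h
  | _ :: _, .node _ _, _, .node _ hall _, h => by
    obtain ⟨c, hc, h⟩ := subtreeAt_node_cons h
    exact (hall c hc).subtree h

lemma Simple.moverAt_ne_of_prefix {t : GTree ι} (ht : Simple t) {a b : List ℕ} {k : ℕ} {i : ι}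
    {ch : List (GTree ι)} (ha : subtreeAt t a = some (.node i ch)) (hb : b ++ [k] <+: a) :
    moverAt t b ≠ some i := by
  intro hmover
  obtain ⟨ch', hch'⟩ : ∃ ch', subtreeAt t b = some (.node i ch') := by
    unfold moverAt at hmover
    split at hmover <;> simp_all
  obtain ⟨r, rfl⟩ := hb
  rw [List.append_assoc, subtreeAt_append, hch', List.singleton_append] at ha
  obtain ⟨c, hc, hcr⟩ := subtreeAt_node_cons ha
  cases ht.subtree hch' with
  | node _ _ hnot => exact hnot c hc (Moves.of_subtreeAt hcr)

def FollowsPath (σ : List ℕ → ℕ) (a r : List ℕ) : Prop :=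
  ∀ b k, b ++ [k] <+: r → σ (a ++ b) = k

lemma Outcome.of_followsPath {σ : List ℕ → ℕ} {w : ι → ℝ} : ∀ (r a : List ℕ) (t s : GTree ι),
    subtreeAt t r = some s → FollowsPath σ a r → Outcome σ s (a ++ r) w → Outcome σ t a w
  | [], a, t, s, h, _, hw => by
    rw [subtreeAt_nil, Option.some_inj] at h
    simpa [h] using hw
  | _ :: _, _, .leaf _, _, h, _, _ => by simp [subtreeAt] at h
  | k :: r, a, .node j ch, s, h, hσ, hw => by
    simp only [subtreeAt] at h
    cases hk : ch[k]? with
    | none => simp [hk] at h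
    | some c =>
      have hσa : σ a = k := by simpa using hσ [] k (by simp)
      refine .node (hσa ▸ hk) (hσa ▸ Outcome.of_followsPath r (a ++ [k]) c s (by simpa [hk] using h)
        (fun b k' hb => by simpa using hσ (k :: b) k' (by simpa using hb)) (by simpa using hw))

lemma Outcome.payoff_le_of_eq_off {σ σ' : List ℕ → ℕ} {adr : List ℕ} {i : ι} {t s : GTree ι}
    (hσ : ∀ b, b ≠ adr → σ b = σ' b) (hs : subtreeAt t adr = some s)
    (hadr : ∀ w w', Outcome σ s adr w → Outcome σ' s adr w' → w i ≤ w' i)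
    {t₀ : GTree ι} {a : List ℕ} {w w' : ι → ℝ} (hw : Outcome σ t₀ a w)
    (hw' : Outcome σ' t₀ a w') (ht₀ : subtreeAt t a = some t₀) : w i ≤ w' i := by
  induction hw generalizing w' with
  | leaf => cases hw'; rfl
  | @node j ch a c w hc _ ih =>
    by_cases ha : a = adr
    · subst ha
      obtain rfl : s = .node j ch := Option.some_inj.mp (hs.symm.trans ht₀)
      exact hadr _ _ (.node hc ‹_›) hw'
    · cases hw' with
      | node hc' hw' =>
        rw [← hσ a ha, hc] at hc'
        cases hc'
        exact ih (hσ a ha ▸ hw') (subtreeAt_append_singleton ht₀ hc)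

lemma Outcome.eq_of_getElem?_leaf {σ : List ℕ → ℕ} {j : ι} {ch : List (GTree ι)} {a : List ℕ}
    {p w : ι → ℝ} (hw : Outcome σ (.node j ch) a w) (hp : ch[σ a]? = some (.leaf p)) :
    w = p := by
  cases hw with
  | node hc hw =>
    rw [hp] at hc
    cases hc
    cases hw
    rfl

theorem stmt16_general {ι : Type} [DecidableEq ι] (t : GTree ι)
    (hs : Simple t)
    (i : ι) (adr : List ℕ) (ch : List (GTree ι))
    (hadr : subtreeAt t adr = some (GTree.node i ch))
    (si : List ℕ → ℕ) (p p' : ι → ℝ) (k' : ℕ)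
    (hchoice : ch[si adr]? = some (GTree.leaf p))
    (hk' : ch[k']? = some (GTree.leaf p'))
    (hmax : ∀ c ∈ ch, ∀ q, c = GTree.leaf q → q i ≤ p' i)
    (hnonBI : p i ≠ p' i) :
    (∀ (sopp : List ℕ → ℕ) (w w' : ι → ℝ),
        Outcome (comb t i si sopp) t [] w →
        Outcome (comb t i (Function.update si adr k') sopp) t [] w' →
        w i ≤ w' i) ∧
    (∃ (sopp : List ℕ → ℕ) (w w' : ι → ℝ),
        Outcome (comb t i si sopp) t [] w ∧
        Outcome (comb t i (Function.update si adr k') sopp) t [] w' ∧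
        w i < w' i) := by
  have hmover : moverAt t adr = some i := by simp [moverAt, hadr]
  have hp : ∀ sopp, ch[comb t i si sopp adr]? = some (.leaf p) := by simpa [comb, hmover]
  have hp' : ∀ sopp, ch[comb t i (Function.update si adr k') sopp adr]? = some (.leaf p') := by
    simpa [comb, hmover]
  have hle : p i ≤ p' i := hmax _ (List.mem_of_getElem? hchoice) p rfl
  refine ⟨fun sopp w w' hw hw' => ?_, ?_⟩
  · refine Outcome.payoff_le_of_eq_off (fun b hb => ?_) hadr (fun w w' hw hw' => ?_) hw hw'
      (subtreeAt_nil t)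
    · by_cases hb' : moverAt t b = some i <;> simp [comb, hb', Function.update_of_ne hb]
    · rw [hw.eq_of_getElem?_leaf (hp sopp), hw'.eq_of_getElem?_leaf (hp' sopp)]
      exact hle
  · let steer : List ℕ → ℕ := fun b => adr.getD b.length 0
    have hfollow : ∀ s, FollowsPath (comb t i s steer) [] adr := by
      rintro s b k ⟨r, rfl⟩
      simp only [comb, List.nil_append, if_neg (hs.moverAt_ne_of_prefix hadr ⟨r, rfl⟩)]
      simp [steer]
    exact ⟨steer, p, p',
      .of_followsPath adr [] t _ hadr (hfollow si) (.node (hp steer) (.leaf _ _)),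
      .of_followsPath adr [] t _ hadr (hfollow _) (.node (hp' steer) (.leaf _ _)),
      lt_of_le_of_ne hle hnonBI⟩

/-- In a simple game, a strategy `si` of player `i` choosing a
non-backward-induction action at a node of `i` all of whose children are
terminal is weakly dominated in the associated normal form by the strategy
`s'i = Function.update si adr k'` that switches to the backward-induction
action `k'` at that node: it does weakly better against every opponent profile
and strictly better against some opponent profile. -/
theorem stmt16 {ι : Type} [DecidableEq ι] (t : GTree ι)
    (hs : Simple t) (hn : NoTies t)
    (i : ι) (adr : List ℕ) (ch : List (GTree ι))
    (hadr : subtreeAt t adr = some (GTree.node i ch))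
    (hterm : ∀ c ∈ ch, ∃ q, c = GTree.leaf q)
    (si : List ℕ → ℕ) (p p' : ι → ℝ) (k' : ℕ)
    (hchoice : ch[si adr]? = some (GTree.leaf p))
    (hk' : ch[k']? = some (GTree.leaf p'))
    (hmax : ∀ c ∈ ch, ∀ q, c = GTree.leaf q → q i ≤ p' i)
    (hnonBI : p i ≠ p' i) :
    (∀ (sopp : List ℕ → ℕ) (w w' : ι → ℝ),
        Outcome (comb t i si sopp) t [] w →
        Outcome (comb t i (Function.update si adr k') sopp) t [] w' →
        w i ≤ w' i) ∧
    (∃ (sopp : List ℕ → ℕ) (w w' : ι → ℝ),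
        Outcome (comb t i si sopp) t [] w ∧
        Outcome (comb t i (Function.update si adr k') sopp) t [] w' ∧
        w i < w' i) :=
  stmt16_general t hs i adr ch hadr si p p' k' hchoice hk' hmax hnonBI
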